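/- Let ε > 0 and let V : ℝ^d → ℝ be real-valued, continuous, and integrable, with Wigner collision kernel 𝒱^ε(x,k) = i (2π)^{−d} ∫_{ℝ^d} δ^ε[V](x,y) e^{i y·k} dy and collision operator ℒ_V^ε[f](x,k) = ∫_{ℝ^d} 𝒱^ε(x, k−p) f(x,p) dp (convolution in k). Then ℒ_V^ε is anti-self-adjoint on L²(ℝ^{2d}): for all Schwartz f₁, f₂ : ℝ^d × ℝ^d → ℂ, ∫_{ℝ^{2d}} ℒ_V^ε[f₁](x,k) conj(f₂(x,k)) dx dk = − ∫_{ℝ^{2d}} f₁(x,k) conj( ℒ_V^ε[f₂](x,k) ) dx dk. -/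

import Mathlib

open MeasureTheory Complex
open scoped SchwartzMap

noncomputable section

/-- `δ^ε[V](x,y) = (1/ε)[V(x + (ε/2)y) − V(x − (ε/2)y)]`. -/
def deltaV (d : ℕ) (ε : ℝ) (V : EuclideanSpace ℝ (Fin d) → ℝ)
    (x y : EuclideanSpace ℝ (Fin d)) : ℝ :=
  ε⁻¹ * (V (x + (ε / 2) • y) - V (x - (ε / 2) • y))

/-- The Wigner collision kernel `𝒱^ε(x,k) = i (2π)^{−d} ∫ δ^ε[V](x,y) e^{i y·k} dy`. -/
def wignerKernel (d : ℕ) (ε : ℝ) (V : EuclideanSpace ℝ (Fin d) → ℝ)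
    (x k : EuclideanSpace ℝ (Fin d)) : ℂ :=
  Complex.I * ((((2 * Real.pi) ^ d)⁻¹ : ℝ) : ℂ) * ∫ y : EuclideanSpace ℝ (Fin d),
    ((deltaV d ε V x y : ℝ) : ℂ) * Complex.exp (Complex.I * ((inner ℝ y k : ℝ) : ℂ))

/-- The Wigner collision operator `ℒ_V^ε[f](x,k) = (𝒱^ε(x,·) ∗ f(x,·))(k)`. -/
def collisionOp (d : ℕ) (ε : ℝ) (V : EuclideanSpace ℝ (Fin d) → ℝ)
    (f : EuclideanSpace ℝ (Fin d) × EuclideanSpace ℝ (Fin d) → ℂ)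
    (x k : EuclideanSpace ℝ (Fin d)) : ℂ :=
  ∫ p : EuclideanSpace ℝ (Fin d), wignerKernel d ε V x (k - p) * f (x, p)

/-! For fixed `x`, `ℒ_V^ε` is convolution in `k` with `K = 𝒱^ε(x, ·)`. This kernel is bounded,
because `δ^ε[V](x, ·)` is integrable with `L¹` norm bounded uniformly in `x`, and it satisfies
`conj (K k) = -K (-k)`, because `δ^ε[V]` is real. Fubini in `(k, p)` then moves the convolution
onto the other factor at the cost of a sign. Schwartz decay in `p`, uniform in `x`, makes all
integrals absolutely convergent, and a last application of Fubini in `x` assembles the fibres. -/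

open ComplexConjugate

section SkewKernel

variable {G : Type*} [AddGroup G] [MeasurableSpace G] [MeasurableSub₂ G] {μ : Measure G} [SFinite μ]

theorem integral_conv_mul_conj_eq_neg {K f g : G → ℂ} {C : ℝ} (hK : Measurable K)
    (hKC : ∀ k, ‖K k‖ ≤ C) (hK_conj : ∀ k, conj (K k) = -K (-k))
    (hf : Integrable f μ) (hg : Integrable g μ) :
    ∫ k, (∫ p, K (k - p) * f p ∂μ) * conj (g k) ∂μ
      = -∫ p, f p * conj (∫ k, K (p - k) * g k ∂μ) ∂μ := by
  have hF : Integrable (fun q : G × G => K (q.1 - q.2) * f q.2 * conj (g q.1)) (μ.prod μ) := by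
    refine ((hg.norm.mul_prod hf.norm).const_mul C).mono' ?_ (.of_forall fun q => ?_)
    · have h1 : AEStronglyMeasurable (fun q : G × G => K (q.1 - q.2)) (μ.prod μ) :=
        (hK.comp measurable_sub).aestronglyMeasurable
      have h2 : AEStronglyMeasurable (fun q : G × G => f q.2) (μ.prod μ) :=
        hf.aestronglyMeasurable.comp_snd
      have h3 : AEStronglyMeasurable (fun q : G × G => conj (g q.1)) (μ.prod μ) :=
        hg.aestronglyMeasurable.comp_fst.star
      exact (h1.mul h2).mul h3
    · rw [norm_mul, norm_mul, RCLike.norm_conj, mul_assoc, mul_comm ‖f q.2‖]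
      exact mul_le_mul_of_nonneg_right (hKC _) (by positivity)
  calc ∫ k, (∫ p, K (k - p) * f p ∂μ) * conj (g k) ∂μ
      = ∫ k, ∫ p, K (k - p) * f p * conj (g k) ∂μ ∂μ := by simp_rw [integral_mul_const]
    _ = ∫ p, ∫ k, K (k - p) * f p * conj (g k) ∂μ ∂μ := integral_integral_swap hF
    _ = -∫ p, f p * conj (∫ k, K (p - k) * g k ∂μ) ∂μ := by
      simp_rw [← integral_conj, map_mul, hK_conj, neg_sub, ← integral_const_mul, ← integral_neg]
      congr with p
      congr with k
      ring

end SkewKernel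

namespace SchwartzMap

variable {E F G : Type*} [NormedAddCommGroup E] [NormedSpace ℝ E] [NormedAddCommGroup F]
  [NormedSpace ℝ F] [NormedAddCommGroup G] [NormedSpace ℝ G] [MeasurableSpace F]

theorem exists_integrable_bound_snd (μ : Measure F) [μ.HasTemperateGrowth] (f : 𝓢(E × F, G)) :
    ∃ b : F → ℝ, Integrable b μ ∧ ∀ x p, ‖f (x, p)‖ ≤ b p := by
  set l := μ.integrablePower
  set C := 2 ^ l * (Finset.Iic (l, 0)).sup (fun m => SchwartzMap.seminorm ℝ m.1 m.2) f
  refine ⟨fun p => C * (1 + ‖p‖) ^ (-(l : ℝ)), μ.integrable_pow_neg_integrablePower.const_mul C,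
    fun x p => ?_⟩
  have hdecay := one_add_le_sup_seminorm_apply (𝕜 := ℝ) (m := (l, 0)) le_rfl le_rfl f (x, p)
  rw [norm_iteratedFDeriv_zero] at hdecay
  have hp : (1 + ‖p‖) ^ l ≤ (1 + ‖(x, p)‖) ^ l := by gcongr; exact norm_snd_le (x, p)
  dsimp only
  rw [Real.rpow_neg (by positivity), Real.rpow_natCast, ← div_eq_mul_inv,
    le_div_iff₀ (by positivity), mul_comm]
  exact (mul_le_mul_of_nonneg_right hp (norm_nonneg _)).trans hdecay

theorem integrable_apply_prodMk [OpensMeasurableSpace F] [SecondCountableTopology F]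
    {μ : Measure F} [μ.HasTemperateGrowth] (f : 𝓢(E × F, G)) (x : E) :
    Integrable (fun p => f (x, p)) μ := by
  obtain ⟨b, hb, hfb⟩ := f.exists_integrable_bound_snd μ
  exact hb.mono' (f.continuous.comp (.prodMk_right x)).aestronglyMeasurable (.of_forall (hfb x))

end SchwartzMap

theorem integral_comp_add_smul {E F : Type*} [NormedAddCommGroup E] [NormedSpace ℝ E]
    [MeasurableSpace E] [BorelSpace E] [FiniteDimensional ℝ E] (μ : Measure E)
    [μ.IsAddHaarMeasure] [NormedAddCommGroup F] [NormedSpace ℝ F] (f : E → F) (x : E) (c : ℝ) :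
    ∫ y, f (x + c • y) ∂μ = |(c ^ Module.finrank ℝ E)⁻¹| • ∫ y, f y ∂μ := by
  rw [Measure.integral_comp_smul μ (fun y => f (x + y)) c, integral_add_left_eq_self]

section Wigner

variable {d : ℕ} {ε : ℝ} {V : EuclideanSpace ℝ (Fin d) → ℝ}

local notation "ℝᵈ" => EuclideanSpace ℝ (Fin d)

lemma integral_norm_deltaV_le (hV : Integrable V) (x : ℝᵈ) :
    ∫ y, ‖deltaV d ε V x y‖ ≤ 2 * |ε|⁻¹ * |((ε / 2) ^ d)⁻¹| * ∫ u, ‖V u‖ := by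
  rcases eq_or_ne ε 0 with rfl | hε
  · simp [deltaV]
  have hc : ε / 2 ≠ 0 := div_ne_zero hε two_ne_zero
  have hadd := (hV.comp_add_left x).comp_smul hc
  have hsub := (hV.comp_add_left x).comp_smul (neg_ne_zero.mpr hc)
  have hint_add := integral_comp_add_smul volume (fun u => ‖V u‖) x (ε / 2)
  have hint_sub := integral_comp_add_smul volume (fun u => ‖V u‖) x (-(ε / 2))
  simp only [neg_smul, ← sub_eq_add_neg, finrank_euclideanSpace_fin] at hsub hint_sub hint_add
  calc ∫ y, ‖deltaV d ε V x y‖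
      ≤ ∫ y, |ε|⁻¹ * (‖V (x + (ε / 2) • y)‖ + ‖V (x - (ε / 2) • y)‖) := by
        refine integral_mono_of_nonneg (.of_forall fun y => norm_nonneg _)
          ((hadd.norm.add hsub.norm).const_mul _) (.of_forall fun y => ?_)
        simp only [deltaV, norm_mul, norm_inv, Real.norm_eq_abs]
        gcongr
        exact abs_sub _ _
    _ = 2 * |ε|⁻¹ * |((ε / 2) ^ d)⁻¹| * ∫ u, ‖V u‖ := by
        rw [integral_const_mul, integral_add hadd.norm hsub.norm, hint_add, hint_sub]
        simp only [smul_eq_mul, abs_inv, abs_pow, abs_neg]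
        ring

lemma norm_wignerKernel_le (x k : ℝᵈ) :
    ‖wignerKernel d ε V x k‖ ≤ ((2 * Real.pi) ^ d)⁻¹ * ∫ y, ‖deltaV d ε V x y‖ := by
  rw [wignerKernel, norm_mul, norm_mul, norm_I, one_mul, norm_real,
    Real.norm_of_nonneg (by positivity)]
  gcongr
  refine (norm_integral_le_integral_norm _).trans_eq ?_
  congr with y
  rw [norm_mul, norm_real, norm_exp_I_mul_ofReal, mul_one]

lemma exists_norm_wignerKernel_le (hV : Integrable V) :
    ∃ C, ∀ x k : ℝᵈ, ‖wignerKernel d ε V x k‖ ≤ C :=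
  ⟨_, fun x k => (norm_wignerKernel_le x k).trans
    (mul_le_mul_of_nonneg_left (integral_norm_deltaV_le hV x) (by positivity))⟩

lemma conj_wignerKernel (x k : ℝᵈ) :
    conj (wignerKernel d ε V x k) = -wignerKernel d ε V x (-k) := by
  simp_rw [wignerKernel, map_mul, ← integral_conj, map_mul, conj_I, conj_ofReal, ← exp_conj,
    map_mul, conj_I, conj_ofReal, inner_neg_right, ofReal_neg]
  ring_nf

lemma measurable_wignerKernel (hV : Measurable V) :
    Measurable (fun q : ℝᵈ × ℝᵈ => wignerKernel d ε V q.1 q.2) := by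
  have h : Measurable (fun z : (ℝᵈ × ℝᵈ) × ℝᵈ =>
      ((deltaV d ε V z.1.1 z.2 : ℝ) : ℂ) * exp (I * ((inner ℝ z.2 z.1.2 : ℝ) : ℂ))) := by
    unfold deltaV
    fun_prop
  exact measurable_const.mul h.stronglyMeasurable.integral_prod_right'.measurable

lemma stronglyMeasurable_collisionOp (hV : Measurable V) {f : ℝᵈ × ℝᵈ → ℂ} (hf : Measurable f) :
    StronglyMeasurable (fun z : ℝᵈ × ℝᵈ => collisionOp d ε V f z.1 z.2) := by
  have h : Measurable (fun w : (ℝᵈ × ℝᵈ) × ℝᵈ =>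
      wignerKernel d ε V w.1.1 (w.1.2 - w.2) * f (w.1.1, w.2)) :=
    ((measurable_wignerKernel hV).comp (measurable_fst.fst.prodMk
      (measurable_fst.snd.sub measurable_snd))).mul
      (hf.comp (measurable_fst.fst.prodMk measurable_snd))
  exact h.stronglyMeasurable.integral_prod_right'

lemma exists_norm_collisionOp_le (hV : Integrable V) (f : 𝓢(ℝᵈ × ℝᵈ, ℂ)) :
    ∃ C, ∀ x k : ℝᵈ, ‖collisionOp d ε V f x k‖ ≤ C := by
  obtain ⟨C, hC⟩ := exists_norm_wignerKernel_le (ε := ε) hV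
  obtain ⟨b, hb, hfb⟩ := f.exists_integrable_bound_snd volume
  refine ⟨C * ∫ p, b p, fun x k => ?_⟩
  rw [collisionOp, ← integral_const_mul]
  refine norm_integral_le_of_norm_le (hb.const_mul C) (.of_forall fun p => ?_)
  rw [norm_mul]
  exact mul_le_mul (hC _ _) (hfb x p) (norm_nonneg _) ((norm_nonneg _).trans (hC x k))

end Wigner

theorem collisionOp_anti_self_adjoint_general (d : ℕ) (ε : ℝ)
    (V : EuclideanSpace ℝ (Fin d) → ℝ) (hVcont : Continuous V)
    (hVint : Integrable V (volume : Measure (EuclideanSpace ℝ (Fin d))))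
    (f₁ f₂ : 𝓢(EuclideanSpace ℝ (Fin d) × EuclideanSpace ℝ (Fin d), ℂ)) :
    ∫ z : EuclideanSpace ℝ (Fin d) × EuclideanSpace ℝ (Fin d),
        collisionOp d ε V (⇑f₁) z.1 z.2 * (starRingEnd ℂ) (f₂ z)
      = -∫ z : EuclideanSpace ℝ (Fin d) × EuclideanSpace ℝ (Fin d),
          f₁ z * (starRingEnd ℂ) (collisionOp d ε V (⇑f₂) z.1 z.2) := by
  obtain ⟨C, hC⟩ := exists_norm_wignerKernel_le (ε := ε) hVint
  obtain ⟨C₁, hC₁⟩ := exists_norm_collisionOp_le (ε := ε) hVint f₁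
  obtain ⟨C₂, hC₂⟩ := exists_norm_collisionOp_le (ε := ε) hVint f₂
  have hL₁ := stronglyMeasurable_collisionOp (ε := ε) hVcont.measurable f₁.continuous.measurable
  have hL₂ := stronglyMeasurable_collisionOp (ε := ε) hVcont.measurable f₂.continuous.measurable
  rw [Measure.volume_eq_prod]
  -- instance search gives up here (`synthInstance.maxSize`), so the instance is supplied by hand
  have : (volume.prod volume : Measure (EuclideanSpace ℝ (Fin d) × EuclideanSpace ℝ (Fin d))
    ).HasTemperateGrowth := Measure.IsAddHaarMeasure.instHasTemperateGrowth
  have hI₁ :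
      Integrable (fun z => collisionOp d ε V f₁ z.1 z.2 * conj (f₂ z)) (volume.prod volume) :=
    (RCLike.conjCLE.toContinuousLinearMap.integrable_comp f₂.integrable).bdd_mul
      hL₁.aestronglyMeasurable (.of_forall fun z => hC₁ z.1 z.2)
  have hI₂ :
      Integrable (fun z => f₁ z * conj (collisionOp d ε V f₂ z.1 z.2)) (volume.prod volume) :=
    f₁.integrable.mul_bdd hL₂.aestronglyMeasurable.star
      (.of_forall fun z => (RCLike.norm_conj _).trans_le (hC₂ z.1 z.2))
  rw [integral_prod _ hI₁, integral_prod _ hI₂, ← integral_neg]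
  congr with x
  exact integral_conv_mul_conj_eq_neg
    ((measurable_wignerKernel hVcont.measurable).comp measurable_prodMk_left) (hC x)
    (conj_wignerKernel x) (f₁.integrable_apply_prodMk x) (f₂.integrable_apply_prodMk x)

/-- The Wigner collision operator is anti-self-adjoint on `L²(ℝ^{2d})`. -/
theorem collisionOp_anti_self_adjoint (d : ℕ) (ε : ℝ) (hε : 0 < ε)
    (V : EuclideanSpace ℝ (Fin d) → ℝ) (hVcont : Continuous V)
    (hVint : Integrable V (volume : Measure (EuclideanSpace ℝ (Fin d))))
    (f₁ f₂ : 𝓢(EuclideanSpace ℝ (Fin d) × EuclideanSpace ℝ (Fin d), ℂ)) :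
    ∫ z : EuclideanSpace ℝ (Fin d) × EuclideanSpace ℝ (Fin d),
        collisionOp d ε V (⇑f₁) z.1 z.2 * (starRingEnd ℂ) (f₂ z)
      = -∫ z : EuclideanSpace ℝ (Fin d) × EuclideanSpace ℝ (Fin d),
          f₁ z * (starRingEnd ℂ) (collisionOp d ε V (⇑f₂) z.1 z.2) :=
  collisionOp_anti_self_adjoint_general d ε V hVcont hVint f₁ f₂

end
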